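/- Let X ∈ ℝ^{m×n}, Ω ∈ ℝ^{n×s}, Ψ ∈ ℝ^{t×m}, and set Y = XΩ, Z = ΨX. If rank(ΨXΩ) = rank(X), then the generalized Nyström approximation is exact: X = Y (ΨXΩ)† Z, where † denotes the Moore–Penrose pseudoinverse. -/

import Mathlib

/-!
If `rank (Ψ X Ω) = rank X`, then also `rank (X Ω) = rank X = rank (Ψ X)`, so `X Ω` has the same
column space as `X` and `Ψ X` the same row space: `X = X Ω W` and `X = V Ψ X` for some `W`, `V`.
Then `X Ω P Ψ X = V (Ψ X Ω) P (Ψ X Ω) W = V (Ψ X Ω) W = X` for any `P` with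
`(Ψ X Ω) P (Ψ X Ω) = Ψ X Ω`, in particular for the pseudoinverse.
-/

open Matrix

namespace Matrix

variable {K : Type*} [Field K] {l m n o : Type*}

theorem exists_eq_mul_mul_of_rank_mul_eq [Fintype n] [Fintype o]
    {A : Matrix m n K} {B : Matrix n o K}
    (h : (A * B).rank = A.rank) : ∃ W : Matrix o n K, A = A * B * W := by
  have hrange : LinearMap.range (A * B).mulVecLin = LinearMap.range A.mulVecLin := by
    refine Submodule.eq_of_le_of_finrank_eq ?_ h
    rw [mulVecLin_mul]
    exact LinearMap.range_comp_le_range _ _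
  have hcol : ∀ j, ∃ v : o → K, (A * B) *ᵥ v = A.col j := by
    classical
    intro j
    have hj : A.col j ∈ LinearMap.range (A * B).mulVecLin :=
      hrange ▸ ⟨Pi.single j 1, mulVec_single_one A j⟩
    exact hj
  choose v hv using hcol
  refine ⟨of fun i j => v j i, ext_col fun j => ?_⟩
  rw [← hv j]
  ext i
  simp [mul_apply, mulVec, dotProduct]

theorem exists_eq_mul_mul_of_rank_mul_eq' [Fintype l] [Fintype m] [Fintype n]
    {A : Matrix m n K} {B : Matrix l m K}
    (h : (B * A).rank = A.rank) : ∃ V : Matrix m l K, A = V * (B * A) := by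
  have hT : (Aᵀ * Bᵀ).rank = Aᵀ.rank := by
    rw [← transpose_mul, rank_transpose, rank_transpose, h]
  obtain ⟨W, hW⟩ := exists_eq_mul_mul_of_rank_mul_eq hT
  refine ⟨Wᵀ, ?_⟩
  simpa [transpose_mul, Matrix.mul_assoc] using congrArg transpose hW

theorem eq_mul_mul_mul_of_rank_mul_mul_eq [Fintype l] [Fintype m] [Fintype n] [Fintype o]
    {X : Matrix m n K} {Ω : Matrix n o K}
    {Ψ : Matrix l m K} {P : Matrix o l K} (hP : Ψ * X * Ω * P * (Ψ * X * Ω) = Ψ * X * Ω)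
    (hrank : (Ψ * X * Ω).rank = X.rank) : X = X * Ω * P * (Ψ * X) := by
  have hXΩ : (X * Ω).rank = X.rank := by
    refine le_antisymm (rank_mul_le_left X Ω) ?_
    calc X.rank = (Ψ * (X * Ω)).rank := by rw [← hrank, Matrix.mul_assoc]
      _ ≤ (X * Ω).rank := rank_mul_le_right Ψ (X * Ω)
  have hΨX : (Ψ * X).rank = X.rank :=
    le_antisymm (rank_mul_le_right Ψ X) (hrank ▸ rank_mul_le_left (Ψ * X) Ω)
  obtain ⟨W, hW⟩ := exists_eq_mul_mul_of_rank_mul_eq hXΩ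
  obtain ⟨V, hV⟩ := exists_eq_mul_mul_of_rank_mul_eq' hΨX
  have hΨXW : Ψ * X = Ψ * X * Ω * W := by
    conv_lhs => rw [hW]
    simp only [Matrix.mul_assoc]
  have hXΩV : X * Ω = V * (Ψ * X * Ω) := by
    conv_lhs => rw [hV]
    simp only [Matrix.mul_assoc]
  calc X = V * (Ψ * X * Ω * W) := by rw [← hΨXW, ← hV]
    _ = V * (Ψ * X * Ω * P * (Ψ * X * Ω) * W) := by rw [hP]
    _ = V * (Ψ * X * Ω) * P * (Ψ * X * Ω * W) := by simp only [Matrix.mul_assoc]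
    _ = X * Ω * P * (Ψ * X) := by rw [← hXΩV, ← hΨXW]

end Matrix

theorem generalized_nystrom_exact_general
    {m n s t : ℕ}
    (X : Matrix (Fin m) (Fin n) ℝ)
    (Ω : Matrix (Fin n) (Fin s) ℝ) (Ψ : Matrix (Fin t) (Fin m) ℝ)
    (Y : Matrix (Fin m) (Fin s) ℝ) (Z : Matrix (Fin t) (Fin n) ℝ)
    (hY : Y = X * Ω) (hZ : Z = Ψ * X)
    (P : Matrix (Fin s) (Fin t) ℝ)
    (hP1 : (Ψ * X * Ω) * P * (Ψ * X * Ω) = Ψ * X * Ω)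
    (hrank : (Ψ * X * Ω).rank = X.rank) :
    X = Y * P * Z := by
  rw [hY, hZ]
  exact eq_mul_mul_mul_of_rank_mul_mul_eq hP1 hrank

/-- Generalized Nyström exactness: if `Y = XΩ`, `Z = ΨX`, `P` is the
Moore–Penrose pseudoinverse of `ΨXΩ` (characterized by the four Penrose conditions),
and `rank (ΨXΩ) = rank X`, then `X = Y * P * Z`. -/
theorem generalized_nystrom_exact
    {m n s t : ℕ}
    (X : Matrix (Fin m) (Fin n) ℝ)
    (Ω : Matrix (Fin n) (Fin s) ℝ) (Ψ : Matrix (Fin t) (Fin m) ℝ)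
    (Y : Matrix (Fin m) (Fin s) ℝ) (Z : Matrix (Fin t) (Fin n) ℝ)
    (hY : Y = X * Ω) (hZ : Z = Ψ * X)
    (P : Matrix (Fin s) (Fin t) ℝ)
    (hP1 : (Ψ * X * Ω) * P * (Ψ * X * Ω) = Ψ * X * Ω)
    (hP2 : P * (Ψ * X * Ω) * P = P)
    (hP3 : ((Ψ * X * Ω) * P)ᵀ = (Ψ * X * Ω) * P)
    (hP4 : (P * (Ψ * X * Ω))ᵀ = P * (Ψ * X * Ω))
    (hrank : (Ψ * X * Ω).rank = X.rank) :
    X = Y * P * Z :=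
  generalized_nystrom_exact_general X Ω Ψ Y Z hY hZ P hP1 hrank
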